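/- arXiv:0911.2674 — 2 statements merged into one kernel-verified Lean document; each statement's English description precedes it below -/
import Mathlib

section
/- For every n×n matrix A of natural numbers (n ≥ 1), the Jacobi number J(A) equals the minimum, over all pairs of functions α, β : Fin n → ℕ satisfying A(i,j) ≤ α(i) + β(j) for all i,j, of Σ_i α(i) + Σ_j β(j). Concretely: (a) every such pair (α,β) satisfies J(A) ≤ Σ_i α(i) + Σ_j β(j), and (b) there exists such a pair with Σ_i α(i) + Σ_j β(j) = J(A). -/
/-- The Jacobi number of a square matrix of naturals: the maximum of the
transversal sums `∑ j, A (σ j) j` over all permutations `σ`. -/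
def jacobiNumber {n : ℕ} (A : Matrix (Fin n) (Fin n) ℕ) : ℕ :=
  Finset.univ.sup fun σ : Equiv.Perm (Fin n) => ∑ j, A (σ j) j

lemma jacobi_weak {n : ℕ} (A : Matrix (Fin n) (Fin n) ℕ) (α β : Fin n → ℕ)
    (h : ∀ i j, A i j ≤ α i + β j) :
    jacobiNumber A ≤ (∑ i, α i) + ∑ j, β j := by
  apply Finset.sup_le
  intro σ _
  calc ∑ j, A (σ j) j ≤ ∑ j, (α (σ j) + β j) := Finset.sum_le_sum fun j _ => h (σ j) j
    _ = (∑ j, α (σ j)) + ∑ j, β j := Finset.sum_add_distrib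
    _ = (∑ i, α i) + ∑ j, β j := by rw [Equiv.sum_comp σ α]

lemma sum_ite_card {n : ℕ} (g : Fin n → ℕ) (N : Finset (Fin n)) :
    (∑ i, (g i + if i ∈ N then 1 else 0)) = (∑ i, g i) + N.card := by
  rw [Finset.sum_add_distrib]
  congr 1
  simp [Finset.sum_ite_mem]

/-- Egerváry-type duality: the Jacobi number of `A` is the minimum of
`∑ α + ∑ β` over all covering pairs `(α, β)`, i.e. pairs with `A i j ≤ α i + β j`. -/
theorem jacobiNumber_minmax_duality (n : ℕ) (hn : 1 ≤ n)
    (A : Matrix (Fin n) (Fin n) ℕ) :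
    (∀ α β : Fin n → ℕ, (∀ i j, A i j ≤ α i + β j) →
        jacobiNumber A ≤ (∑ i, α i) + ∑ j, β j) ∧
      ∃ α β : Fin n → ℕ, (∀ i j, A i j ≤ α i + β j) ∧
        (∑ i, α i) + (∑ j, β j) = jacobiNumber A := by
  classical
  refine ⟨fun α β h => jacobi_weak A α β h, ?_⟩
  have hex : ∃ S : ℕ, ∃ α β : Fin n → ℕ, (∀ i j, A i j ≤ α i + β j) ∧
      (∑ i, α i) + (∑ j, β j) = S := by
    refine ⟨_, fun i => Finset.univ.sup (A i), 0, fun i j => ?_, rfl⟩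
    simpa using Finset.le_sup (f := A i) (Finset.mem_univ j)
  obtain ⟨α, β, hcov, hsum⟩ := Nat.find_spec hex
  set S0 := Nat.find hex with hS0
  -- the tight graph
  set t : Fin n → Finset (Fin n) := fun j => Finset.univ.filter fun i => A i j = α i + β j
    with ht
  have hall : ∀ T : Finset (Fin n), T.card ≤ (T.biUnion t).card := by
    intro T
    by_contra hlt
    push_neg at hlt
    set N := T.biUnion t with hN
    have hnot : ∀ i j, j ∈ T → i ∉ N → A i j < α i + β j := by
      intro i j hj hi
      rcases lt_or_eq_of_le (hcov i j) with h | h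
      · exact h
      · exact absurd (Finset.mem_biUnion.mpr
          ⟨j, hj, Finset.mem_filter.mpr ⟨Finset.mem_univ i, h⟩⟩) hi
    by_cases hz : ∃ j ∈ T, β j = 0
    · -- some column in T has β = 0; move mass off rows outside N
      obtain ⟨j0, hj0, hbj0⟩ := hz
      have hα1 : ∀ i, i ∉ N → 1 ≤ α i := fun i hi => by
        have := hnot i j0 hj0 hi; omega
      set α' : Fin n → ℕ := fun i => if i ∈ N then α i else α i - 1 with hα'
      set β' : Fin n → ℕ := fun j => if j ∈ T then β j else β j + 1 with hβ'
      have hcov' : ∀ i j, A i j ≤ α' i + β' j := by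
        intro i j
        by_cases hiN : i ∈ N <;> by_cases hjT : j ∈ T <;>
          simp only [hα', hβ', if_pos, if_neg, hiN, hjT, if_true, if_false]
        · exact hcov i j
        · have := hcov i j; omega
        · have := hnot i j hjT hiN; have := hα1 i hiN; omega
        · have := hcov i j; have := hα1 i hiN; omega
      have hsα : (∑ i, α i) = (∑ i, α' i) + Nᶜ.card := by
        rw [← sum_ite_card α' Nᶜ]
        refine Finset.sum_congr rfl fun i _ => ?_
        by_cases hiN : i ∈ N
        · simp [hα', hiN]
        · have := hα1 i hiN
          simp only [hα', if_neg hiN, Finset.mem_compl, hiN, not_false_iff, if_true]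
          omega
      have hsβ : (∑ j, β' j) = (∑ j, β j) + Tᶜ.card := by
        rw [← sum_ite_card β Tᶜ]
        refine Finset.sum_congr rfl fun j _ => ?_
        by_cases hjT : j ∈ T <;> simp [hβ', hjT]
      have hcards : Tᶜ.card < Nᶜ.card := by
        have hT : T.card ≤ n := by simpa using T.card_le_univ
        have h1 : Tᶜ.card = n - T.card := by simp [Finset.card_compl]
        have h2 : Nᶜ.card = n - N.card := by simp [Finset.card_compl]
        omega
      have hlt' : (∑ i, α' i) + (∑ j, β' j) < S0 := by omega
      exact Nat.find_min hex hlt' ⟨α', β', hcov', rfl⟩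
    · -- all β positive on T; standard Hungarian move
      push_neg at hz
      have hβ1 : ∀ j ∈ T, 1 ≤ β j := fun j hj => Nat.one_le_iff_ne_zero.mpr (hz j hj)
      set α' : Fin n → ℕ := fun i => if i ∈ N then α i + 1 else α i with hα'
      set β' : Fin n → ℕ := fun j => if j ∈ T then β j - 1 else β j with hβ'
      have hcov' : ∀ i j, A i j ≤ α' i + β' j := by
        intro i j
        by_cases hiN : i ∈ N <;> by_cases hjT : j ∈ T <;>
          simp only [hα', hβ', if_pos, if_neg, hiN, hjT, if_true, if_false]
        · have := hcov i j; have := hβ1 j hjT; omega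
        · have := hcov i j; omega
        · have := hnot i j hjT hiN; have := hβ1 j hjT; omega
        · exact hcov i j
      have hsα : (∑ i, α' i) = (∑ i, α i) + N.card := by
        rw [← sum_ite_card α N]
        refine Finset.sum_congr rfl fun i _ => ?_
        by_cases hiN : i ∈ N <;> simp [hα', hiN]
      have hsβ : (∑ j, β j) = (∑ j, β' j) + T.card := by
        rw [← sum_ite_card β' T]
        refine Finset.sum_congr rfl fun j _ => ?_
        by_cases hjT : j ∈ T
        · have := hβ1 j hjT
          simp only [hβ', if_pos hjT, hjT, if_true]
          omega
        · simp [hβ', hjT]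
      have hlt' : (∑ i, α' i) + (∑ j, β' j) < S0 := by omega
      exact Nat.find_min hex hlt' ⟨α', β', hcov', rfl⟩
  obtain ⟨f, hfinj, hft⟩ := (Finset.all_card_le_biUnion_card_iff_exists_injective t).mp hall
  have hbij : Function.Bijective f := (Finite.injective_iff_bijective).mp hfinj
  set σ : Equiv.Perm (Fin n) := Equiv.ofBijective f hbij with hσ
  have htight : ∀ j, A (f j) j = α (f j) + β j := fun j => by
    have := hft j
    simp only [ht, Finset.mem_filter] at this
    exact this.2
  have hge : (∑ i, α i) + (∑ j, β j) ≤ jacobiNumber A := by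
    have hle := Finset.le_sup (f := fun σ : Equiv.Perm (Fin n) => ∑ j, A (σ j) j)
      (Finset.mem_univ σ)
    have : (∑ j, A (σ j) j) = (∑ i, α i) + ∑ j, β j := by
      calc (∑ j, A (σ j) j) = ∑ j, (α (σ j) + β j) :=
            Finset.sum_congr rfl fun j _ => htight j
        _ = (∑ j, α (σ j)) + ∑ j, β j := Finset.sum_add_distrib
        _ = (∑ i, α i) + ∑ j, β j := by rw [Equiv.sum_comp σ α]
    rw [← this]
    exact hle
  exact ⟨α, β, hcov, le_antisymm hge (jacobi_weak A α β hcov)⟩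
end

section
/- Let A be an n×n matrix of natural numbers (n ≥ 1) and let (λ,σ) be a canon for A. Set Λ = max_i λ(i), α(i) = Λ − λ(i), and let β(j) = max_i (A(i,j) − α(i)), the maximum taken in the integers. Then β(j) ≥ 0 for every j, one has A(i,j) ≤ α(i) + β(j) for all i,j, and Σ_i α(i) + Σ_j β(j) = J(A). -/
/-- let `(lam, σ)` be a canon for `A`, `Λ = max_i lam i`,
`α i = Λ - lam i` and `β j = max_i ((A i j : ℤ) - α i)` (maximum in ℤ, expressed
by `IsGreatest`). Then `β j ≥ 0`, `A i j ≤ α i + β j`, and `∑ α + ∑ β = J(A)`. -/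
theorem canon_alpha_beta (n : ℕ) (hn : 1 ≤ n) (A : Matrix (Fin n) (Fin n) ℕ)
    (lam : Fin n → ℕ) (σ : Equiv.Perm (Fin n))
    (hcanon : ∀ i j : Fin n, A i j + lam i ≤ A (σ j) j + lam (σ j))
    (Λ : ℕ) (hΛ : Λ = Finset.univ.sup lam)
    (α : Fin n → ℕ) (hα : ∀ i, α i = Λ - lam i)
    (β : Fin n → ℤ)
    (hβ : ∀ j, IsGreatest (Set.range fun i : Fin n => (A i j : ℤ) - (α i : ℤ)) (β j)) :
    (∀ j, 0 ≤ β j) ∧ (∀ i j, (A i j : ℤ) ≤ (α i : ℤ) + β j) ∧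
      (∑ i, (α i : ℤ)) + (∑ j, β j) = (jacobiNumber A : ℤ) := by
  have hle : ∀ i, lam i ≤ Λ := fun i => hΛ ▸ Finset.le_sup (Finset.mem_univ i)
  have hαZ : ∀ i, (α i : ℤ) = (Λ : ℤ) - (lam i : ℤ) := by
    intro i
    rw [hα i, Nat.cast_sub (hle i)]
  -- existence of i* with lam i* = Λ
  obtain ⟨i₀, _, hi₀⟩ := Finset.exists_mem_eq_sup (Finset.univ : Finset (Fin n))
    (Finset.univ_nonempty_iff.mpr (Fin.pos_iff_nonempty.mp hn)) lam
  have hαi₀ : (α i₀ : ℤ) = 0 := by rw [hαZ, hΛ, hi₀]; ring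
  have hβ0 : ∀ j, 0 ≤ β j := by
    intro j
    have := (hβ j).2 ⟨i₀, rfl⟩
    have : (A i₀ j : ℤ) - (α i₀ : ℤ) ≤ β j := this
    rw [hαi₀] at this
    have h0 : (0 : ℤ) ≤ (A i₀ j : ℤ) := Int.natCast_nonneg _
    linarith
  have hub : ∀ i j, (A i j : ℤ) ≤ (α i : ℤ) + β j := by
    intro i j
    have h := (hβ j).2 ⟨i, rfl⟩
    simp only at h
    linarith
  refine ⟨hβ0, hub, ?_⟩
  -- β j = A (σ j) j - α (σ j)
  have hβeq : ∀ j, β j = (A (σ j) j : ℤ) - (α (σ j) : ℤ) := by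
    intro j
    obtain ⟨i, hi⟩ := (hβ j).1
    have h1 : (A (σ j) j : ℤ) - (α (σ j) : ℤ) ≤ β j := (hβ j).2 ⟨σ j, rfl⟩
    have h2 : (A i j : ℤ) + (lam i : ℤ) ≤ (A (σ j) j : ℤ) + (lam (σ j) : ℤ) := by
      exact_mod_cast hcanon i j
    simp only at hi
    rw [hαZ] at hi h1 ⊢
    linarith
  have hsum : (∑ i, (α i : ℤ)) + (∑ j, β j) = ∑ j, (A (σ j) j : ℤ) := by
    have hperm : (∑ i, (α i : ℤ)) = ∑ j, (α (σ j) : ℤ) :=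
      (Equiv.sum_comp σ fun i => (α i : ℤ)).symm
    rw [hperm, ← Finset.sum_add_distrib]
    exact Finset.sum_congr rfl fun j _ => by rw [hβeq j]; ring
  rw [hsum]
  -- jacobiNumber A = ∑ j, A (σ j) j
  have : jacobiNumber A = ∑ j, A (σ j) j := by
    apply le_antisymm
    · apply Finset.sup_le
      intro τ _
      have h1 : ∑ j, (A (τ j) j + lam (τ j)) ≤ ∑ j, (A (σ j) j + lam (σ j)) :=
        Finset.sum_le_sum fun j _ => hcanon (τ j) j
      have h2 : ∑ j, lam (τ j) = ∑ j, lam (σ j) := by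
        rw [Equiv.sum_comp τ lam, Equiv.sum_comp σ lam]
      simp only [Finset.sum_add_distrib] at h1
      omega
    · exact Finset.le_sup (f := fun σ : Equiv.Perm (Fin n) => ∑ j, A (σ j) j)
        (Finset.mem_univ σ)
  exact_mod_cast this.symm
end
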